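/- (Parabolic Vitali covering lemma.) For z = (x,t) ∈ ℝ³ × ℝ and r > 0 let Q_r(z) = B_r(x) × (t − r², t) and Q*(z,r) = B_r(x) × (t − (7/8)r², t + (1/8)r²). Let 𝒥 be any collection of parabolic cylinders Q_{r_α}(z_α) all contained in a fixed bounded subset of ℝ⁴. Then there exists a countable subfamily { Q_{r_j}(z_j) }_{j∈ℕ} ⊆ 𝒥 of pairwise disjoint cylinders such that every cylinder Q_{r_α}(z_α) ∈ 𝒥 is contained in Q*(z_j, 10·r_j) for some j. -/

import Mathlib

open MeasureTheory Set

noncomputable section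

abbrev E3 := EuclideanSpace ℝ (Fin 3)

/-- The parabolic cylinder `Q_r(z) = B_r(x) × (t − r², t)` for `z = (x,t)`. -/
def Qcyl (z : E3 × ℝ) (r : ℝ) : Set (E3 × ℝ) :=
  Metric.ball z.1 r ×ˢ Set.Ioo (z.2 - r ^ 2) z.2

/-- The time-translated cylinder `Q*(z,r) = B_r(x) × (t − (7/8)r², t + (1/8)r²)`. -/
def Qstar (z : E3 × ℝ) (r : ℝ) : Set (E3 × ℝ) :=
  Metric.ball z.1 r ×ˢ Set.Ioo (z.2 - 7/8 * r ^ 2) (z.2 + 1/8 * r ^ 2)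

/-!
The Vitali selection for an arbitrary family of sets with bounded "radii" yields a disjoint
subfamily such that every cylinder `Q_a` meets some chosen `Q_j` with `r_a ≤ 2 r_j`. Such a
`Q_a` lies in `Q*(z_j, 10 r_j)`: spatially it is within `2 r_a + r_j ≤ 5 r_j` of `x_j`, and its
times lie within `r_a² ≤ 4 r_j²` of a common time of `Q_a` and `Q_j`. The radii are bounded
because a cylinder of radius `r` has time extent `r²`, and disjoint open sets in `ℝ⁴` are
countably many.
-/

theorem isOpen_Qcyl (z : E3 × ℝ) (r : ℝ) : IsOpen (Qcyl z r) :=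
  Metric.isOpen_ball.prod isOpen_Ioo

theorem mk_sub_mul_sq_mem_Qcyl {z : E3 × ℝ} {r c : ℝ} (hr : 0 < r) (hc₀ : 0 < c) (hc₁ : c < 1) :
    (z.1, z.2 - c * r ^ 2) ∈ Qcyl z r := by
  have hr2 : 0 < r ^ 2 := by positivity
  refine ⟨Metric.mem_ball_self hr, ?_, ?_⟩ <;> dsimp only <;> nlinarith

theorem Qcyl_nonempty {z : E3 × ℝ} {r : ℝ} (hr : 0 < r) : (Qcyl z r).Nonempty :=
  ⟨_, mk_sub_mul_sq_mem_Qcyl (c := 1 / 2) hr (by norm_num) (by norm_num)⟩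

theorem sq_div_two_le_diam_of_Qcyl_subset {z : E3 × ℝ} {r : ℝ} {B : Set (E3 × ℝ)}
    (hr : 0 < r) (hB : Bornology.IsBounded B) (hQB : Qcyl z r ⊆ B) :
    r ^ 2 / 2 ≤ Metric.diam B := by
  have hp := hQB (mk_sub_mul_sq_mem_Qcyl (c := 1 / 4) hr (by norm_num) (by norm_num))
  have hq := hQB (mk_sub_mul_sq_mem_Qcyl (c := 3 / 4) hr (by norm_num) (by norm_num))
  calc r ^ 2 / 2
      = dist (z.2 - 1 / 4 * r ^ 2) (z.2 - 3 / 4 * r ^ 2) := by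
        rw [Real.dist_eq, abs_of_nonneg (by nlinarith)]; ring
    _ ≤ dist (z.1, z.2 - 1 / 4 * r ^ 2) (z.1, z.2 - 3 / 4 * r ^ 2) := le_max_right _ _
    _ ≤ Metric.diam B := Metric.dist_le_diam_of_mem hB hp hq

theorem Qcyl_subset_Qstar {za zb : E3 × ℝ} {ra rb : ℝ} (hra : 0 < ra)
    (hmeet : (Qcyl za ra ∩ Qcyl zb rb).Nonempty) (hle : ra ≤ 2 * rb) :
    Qcyl za ra ⊆ Qstar zb (10 * rb) := by
  obtain ⟨⟨y, s⟩, ⟨hya, hsa⟩, ⟨hyb, hsb⟩⟩ := hmeet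
  rintro ⟨y', s'⟩ ⟨hy', hs'⟩
  simp only [Qstar, Set.mem_prod, Metric.mem_ball, Set.mem_Ioo] at *
  have hsq : ra ^ 2 ≤ 4 * rb ^ 2 := by nlinarith
  refine ⟨?_, by nlinarith, by nlinarith⟩
  calc dist y' zb.1 ≤ dist y' za.1 + dist za.1 y + dist y zb.1 := dist_triangle4 _ _ _ _
    _ < ra + ra + rb := by rw [dist_comm za.1]; linarith
    _ ≤ 10 * rb := by linarith

/-- Parabolic Vitali covering lemma: from any collection of parabolic cylinders contained in
a bounded subset of `ℝ⁴ = ℝ³ × ℝ` one can extract a countable pairwise disjoint subfamily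
such that every cylinder of the collection is contained in `Q*(z_j, 10 r_j)` for some member
of the subfamily. -/
theorem parabolic_vitali_covering {ι : Type*} (z : ι → E3 × ℝ) (r : ι → ℝ)
    (hr : ∀ a : ι, 0 < r a)
    (hbdd : ∃ B : Set (E3 × ℝ), Bornology.IsBounded B ∧ ∀ a : ι, Qcyl (z a) (r a) ⊆ B) :
    ∃ J : Set ι, J.Countable ∧
      (J.PairwiseDisjoint fun j => Qcyl (z j) (r j)) ∧
      ∀ a : ι, ∃ j ∈ J, Qcyl (z a) (r a) ⊆ Qstar (z j) (10 * r j) := by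
  obtain ⟨B, hB, hQB⟩ := hbdd
  have hr_le : ∀ a, r a ≤ √(2 * Metric.diam B) := fun a =>
    Real.le_sqrt_of_sq_le (by linarith [sq_div_two_le_diam_of_Qcyl_subset (hr a) hB (hQB a)])
  obtain ⟨J, -, hdisj, hcover⟩ :=
    Vitali.exists_disjoint_subfamily_covering_enlargement (fun a => Qcyl (z a) (r a)) univ r
      2 one_lt_two (fun a _ => (hr a).le) _ (fun a _ => hr_le a) (fun a _ => Qcyl_nonempty (hr a))
  refine ⟨J, hdisj.countable_of_nonempty_interior fun a _ => ?_, hdisj, fun a => ?_⟩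
  · rw [(isOpen_Qcyl _ _).interior_eq]
    exact Qcyl_nonempty (hr a)
  · obtain ⟨j, hj, hmeet, hle⟩ := hcover a (mem_univ a)
    exact ⟨j, hj, Qcyl_subset_Qstar (hr a) hmeet hle⟩
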